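/- arXiv:2210.05352 — 2 statements merged into one kernel-verified Lean document; each statement's English description precedes it below -/
import Mathlib

section
/- For any U ∈ ℋ (square-summable sequence on the half-space grid satisfying the extrapolation condition), there holds ⟨D₁,₀ U ; Δ₁ U⟩_{ℓ²(𝓘)} = 0. -/
/-!
With `d j = U (j+1) - U j` one has `D₁,₀ U = (d j + d (j-1))/2` and `Δ₁ U = d j - d (j-1)`,
so the summand is `(d j² - d (j-1)²)/2` and the sum over `j ≥ 0` telescopes to `-d(-1)²/2`,
which vanishes by the extrapolation condition.
-/

noncomputable section

/-- Forward difference in the first variable. -/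
def D1p (u : ℤ → ℤ → ℝ) : ℤ → ℤ → ℝ := fun j k => u (j + 1) k - u j k
/-- Backward difference in the first variable. -/
def D1m (u : ℤ → ℤ → ℝ) : ℤ → ℤ → ℝ := fun j k => u j k - u (j - 1) k
/-- Forward difference in the second variable. -/
def D2p (u : ℤ → ℤ → ℝ) : ℤ → ℤ → ℝ := fun j k => u j (k + 1) - u j k
/-- Backward difference in the second variable. -/
def D2m (u : ℤ → ℤ → ℝ) : ℤ → ℤ → ℝ := fun j k => u j k - u j (k - 1)
/-- Centered difference in the first variable. -/
def D10 (u : ℤ → ℤ → ℝ) : ℤ → ℤ → ℝ := fun j k => (D1p u j k + D1m u j k) / 2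
/-- Centered difference in the second variable. -/
def D20 (u : ℤ → ℤ → ℝ) : ℤ → ℤ → ℝ := fun j k => (D2p u j k + D2m u j k) / 2
/-- Discrete Laplacian in the first variable. -/
def L1 (u : ℤ → ℤ → ℝ) : ℤ → ℤ → ℝ := D1p (D1m u)
/-- Discrete Laplacian in the second variable. -/
def L2 (u : ℤ → ℤ → ℝ) : ℤ → ℤ → ℝ := D2p (D2m u)

/-- Squared ℓ²(ℤ²) norm. -/
def sqZ (u : ℤ → ℤ → ℝ) : ℝ := ∑' p : ℤ × ℤ, (u p.1 p.2) ^ 2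
/-- ℓ²(ℤ²) scalar product. -/
def ipZ (u v : ℤ → ℤ → ℝ) : ℝ := ∑' p : ℤ × ℤ, u p.1 p.2 * v p.1 p.2

/-- Squared ℓ²(𝓘) norm over the interior indices 𝓘 = ℕ × ℤ of the half-space grid. -/
def sqH (u : ℤ → ℤ → ℝ) : ℝ := ∑' p : ℕ × ℤ, (u (p.1 : ℤ) p.2) ^ 2
/-- ℓ²(𝓘) scalar product over the interior indices 𝓘 = ℕ × ℤ. -/
def ipH (u v : ℤ → ℤ → ℝ) : ℝ := ∑' p : ℕ × ℤ, u (p.1 : ℤ) p.2 * v (p.1 : ℤ) p.2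
/-- Membership in ℋ : square-summable on the half-space grid and satisfying the
extrapolation (Neumann) boundary condition `u (-1) k = u 0 k`. -/
def memH (u : ℤ → ℤ → ℝ) : Prop :=
  (∀ k : ℤ, u (-1) k = u 0 k) ∧ Summable (fun p : ℕ × ℤ => (u (p.1 : ℤ) p.2) ^ 2)

/-- Squared ℓ²(𝔦) norm over the interior indices 𝔦 = ℕ × ℕ of the quarter-space grid. -/
def sqQ (u : ℤ → ℤ → ℝ) : ℝ := ∑' p : ℕ × ℕ, (u (p.1 : ℤ) (p.2 : ℤ)) ^ 2
/-- ℓ²(𝔦) scalar product over the interior indices 𝔦 = ℕ × ℕ. -/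
def ipQ (u v : ℤ → ℤ → ℝ) : ℝ :=
  ∑' p : ℕ × ℕ, u (p.1 : ℤ) (p.2 : ℤ) * v (p.1 : ℤ) (p.2 : ℤ)
/-- Membership in 𝔥 : square-summable on the quarter-space grid, satisfying the
extrapolation boundary conditions on both sides and the corner condition. -/
def memQ (u : ℤ → ℤ → ℝ) : Prop :=
  (∀ k : ℤ, -1 ≤ k → u (-1) k = u 0 k) ∧ (∀ j : ℤ, 0 ≤ j → u j (-1) = u j 0) ∧
    Summable (fun p : ℕ × ℕ => (u (p.1 : ℤ) (p.2 : ℤ)) ^ 2)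

/-- The skew-selfadjoint part `v` in the decomposition of the Lax-Wendroff scheme. -/
def vop (α β : ℝ) (u : ℤ → ℤ → ℝ) : ℤ → ℤ → ℝ :=
  fun j k => -α * D10 u j k - β * D20 u j k
/-- The selfadjoint part `w` in the decomposition of the Lax-Wendroff scheme. -/
def wop (α β : ℝ) (u : ℤ → ℤ → ℝ) : ℤ → ℤ → ℝ :=
  fun j k => -(α ^ 2 / 2) * L1 u j k - (β ^ 2 / 2) * L2 u j k
    - α * β * D10 (D20 u) j k + ((α ^ 2 + β ^ 2) / 8) * L1 (L2 u) j k

section ShiftFst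

variable {M ι : Type*}

private lemma succ_fst_injective :
    Function.Injective fun p : ℕ × ι => (p.1 + 1, p.2) := by
  rintro ⟨a, k⟩ ⟨b, l⟩ h
  simp_all

private lemma shift_fst_comp_succ_fst (f : ℤ → ι → M) :
    (fun p : ℕ × ι => f ((p.1 : ℤ) - 1) p.2) ∘ (fun p : ℕ × ι => (p.1 + 1, p.2)) =
      fun p => f p.1 p.2 := by
  ext p
  simp

private lemma shift_fst_eq_zero_of_notMem_range [Zero M] (f : ℤ → ι → M)
    (h0 : ∀ k, f (-1) k = 0) :
    ∀ p ∉ Set.range (fun p : ℕ × ι => (p.1 + 1, p.2)), f ((p.1 : ℤ) - 1) p.2 = 0 := by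
  rintro ⟨j, k⟩ hp
  rcases j with _ | i
  · simpa using h0 k
  · exact absurd ⟨(i, k), rfl⟩ hp

variable [AddCommMonoid M] [TopologicalSpace M]

lemma summable_shift_fst_iff (f : ℤ → ι → M) (h0 : ∀ k, f (-1) k = 0) :
    Summable (fun p : ℕ × ι => f ((p.1 : ℤ) - 1) p.2) ↔
      Summable (fun p : ℕ × ι => f p.1 p.2) := by
  rw [← succ_fst_injective.summable_iff (shift_fst_eq_zero_of_notMem_range f h0),
    shift_fst_comp_succ_fst]

lemma tsum_shift_fst (f : ℤ → ι → M) (h0 : ∀ k, f (-1) k = 0) :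
    ∑' p : ℕ × ι, f ((p.1 : ℤ) - 1) p.2 = ∑' p : ℕ × ι, f p.1 p.2 := by
  rw [← succ_fst_injective.tsum_eq
    (Function.support_subset_iff'.2 (shift_fst_eq_zero_of_notMem_range f h0))]
  exact congrArg tsum (shift_fst_comp_succ_fst f)

lemma tsum_sub_shift_fst {G : Type*} [AddCommGroup G] [TopologicalSpace G]
    [IsTopologicalAddGroup G] [T2Space G] (f : ℤ → ι → G) (h0 : ∀ k, f (-1) k = 0)
    (hf : Summable fun p : ℕ × ι => f p.1 p.2) :
    ∑' p : ℕ × ι, (f p.1 p.2 - f ((p.1 : ℤ) - 1) p.2) = 0 := by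
  rw [hf.tsum_sub ((summable_shift_fst_iff f h0).2 hf), tsum_shift_fst f h0, sub_self]

end ShiftFst

lemma D10_mul_L1 (u : ℤ → ℤ → ℝ) (j k : ℤ) :
    D10 u j k * L1 u j k = D1p u j k ^ 2 / 2 - D1p u (j - 1) k ^ 2 / 2 := by
  simp only [D10, L1, D1p, D1m, sub_add_cancel, add_sub_cancel_right]
  ring

lemma summable_sq_D1p {u : ℤ → ℤ → ℝ} (hu : Summable fun p : ℕ × ℤ => u p.1 p.2 ^ 2) :
    Summable fun p : ℕ × ℤ => D1p u p.1 p.2 ^ 2 := by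
  have hsucc : Summable fun p : ℕ × ℤ => u ((p.1 : ℤ) + 1) p.2 ^ 2 := by
    simpa [Function.comp_def] using hu.comp_injective succ_fst_injective
  refine .of_nonneg_of_le (fun _ => sq_nonneg _) (fun p => ?_) ((hsucc.add hu).mul_left 2)
  simp only [D1p]
  nlinarith [sq_nonneg (u ((p.1 : ℤ) + 1) p.2 + u p.1 p.2)]

/-- Lemma 5 (ii): `⟨D₁,₀ U ; Δ₁ U⟩_{ℓ²(𝓘)} = 0` for `U ∈ ℋ`. -/
theorem halfspace_d10_lap1_orthogonal (U : ℤ → ℤ → ℝ) (hU : memH U) :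
    ipH (D10 U) (L1 U) = 0 := by
  obtain ⟨hbdry, hsum⟩ := hU
  have h0 : ∀ k, D1p U (-1) k ^ 2 / 2 = 0 := fun k => by
    simp [D1p, hbdry k]
  calc ipH (D10 U) (L1 U)
      = ∑' p : ℕ × ℤ, (D1p U p.1 p.2 ^ 2 / 2 - D1p U ((p.1 : ℤ) - 1) p.2 ^ 2 / 2) :=
        tsum_congr fun p => D10_mul_L1 U p.1 p.2
    _ = 0 := tsum_sub_shift_fst (fun j k => D1p U j k ^ 2 / 2) h0
        ((summable_sq_D1p hsum).div_const 2)
end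
end

section
/- Let a < 0, b ∈ ℝ, λ > 0, μ > 0, and set α := λa, β := μb. Let u ∈ ℋ and define on the interior indices 𝓘: v := −α D₁,₀ u − β D₂,₀ u and w := −(α²/2) Δ₁ u − (β²/2) Δ₂ u − αβ D₁,₀ D₂,₀ u + ((α²+β²)/8) Δ₁ Δ₂ u. Then 2⟨v ; w⟩_{ℓ²(𝓘)} = −(λ|a|·(μb)²/2) · ∑_{k∈ℤ} u_{0,k} · (Δ₂ u)_{0,k+1}. -/
noncomputable section

/-! Every term of the expansion of `2⟨v, w⟩` is evaluated by discrete summation by parts.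
Shifts in `k` are bijections of `ℕ × ℤ`, so `D20` is skew-adjoint and `⟨f, L2 g⟩ = -⟨D2m f, D2m g⟩`;
a telescoping sum in `j` instead leaves the boundary row `j = 0`, where the extrapolation
condition `u (-1) = u 0` kills `D1m`. As all difference operators commute, six of the eight
terms reduce to `⟨g, D20 g⟩ = 0` or `⟨D10 g, L1 g⟩ = 0`. The other two leave the row sums
`½ ∑ (D2m u)₀ₖ²` and `-½ ∑ (D20 u)₀ₖ²`, which one more summation by parts in `k` turns into
`∑ u₀ₖ (L2 u)₀,ₖ₊₁`. -/

theorem Summable.mul_of_sq {ι : Type*} {f g : ι → ℝ} (hf : Summable fun i => f i ^ 2)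
    (hg : Summable fun i => g i ^ 2) : Summable fun i => f i * g i :=
  Summable.of_norm_bounded (hf.add hg) fun i => by
    rw [Real.norm_eq_abs, abs_mul]
    nlinarith [sq_abs (f i), sq_abs (g i), two_mul_le_add_sq |f i| |g i|]

theorem hasSum_sub_comp_equiv {α G : Type*} [AddCommGroup G] [TopologicalSpace G]
    [IsTopologicalAddGroup G] {f : α → G} (e : α ≃ α) (hf : Summable f) :
    HasSum (fun x => f (e x) - f x) 0 := by
  simpa [e.tsum_eq] using (e.summable_iff.mpr hf).hasSum.sub hf.hasSum

theorem hasSum_sub_succ_snd {G : ℤ → ℤ → ℝ} (hG : Summable fun p : ℕ × ℤ => G p.1 p.2) :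
    HasSum (fun p : ℕ × ℤ => G p.1 (p.2 + 1) - G p.1 p.2) 0 :=
  (hasSum_sub_comp_equiv (f := fun p : ℕ × ℤ => G p.1 p.2)
    ((Equiv.refl ℕ).prodCongr (Equiv.addRight 1)) hG).congr_fun fun _ => rfl

theorem hasSum_sub_succ_fst {G : ℤ → ℤ → ℝ} (hG : Summable fun p : ℕ × ℤ => G p.1 p.2) :
    HasSum (fun p : ℕ × ℤ => G (p.1 + 1) p.2 - G p.1 p.2) (-∑' k, G 0 k) := by
  have hsucc : Summable fun p : ℕ × ℤ => G (p.1 + 1) p.2 := by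
    refine (hG.comp_injective (i := fun p : ℕ × ℤ => (p.1 + 1, p.2)) ?_).congr fun p => ?_
    · intro p q h
      simpa [Prod.ext_iff] using h
    · simp
  have hrows : ∑' p : ℕ × ℤ, G p.1 p.2 = ∑' k, G 0 k + ∑' p : ℕ × ℤ, G (p.1 + 1) p.2 := by
    rw [hG.tsum_prod, hG.prod.tsum_eq_zero_add, hsucc.tsum_prod]
    simp
  simpa [hrows] using hsucc.hasSum.sub hG.hasSum

def HalfSqSummable (f : ℤ → ℤ → ℝ) : Prop := Summable fun p : ℕ × ℤ => f p.1 p.2 ^ 2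

namespace HalfSqSummable

variable {f g : ℤ → ℤ → ℝ}

theorem mul (hf : HalfSqSummable f) (hg : HalfSqSummable g) :
    Summable fun p : ℕ × ℤ => f p.1 p.2 * g p.1 p.2 :=
  Summable.mul_of_sq hf hg

theorem add (hf : HalfSqSummable f) (hg : HalfSqSummable g) :
    HalfSqSummable fun j k => f j k + g j k :=
  ((Summable.add hf hg).add ((hf.mul hg).mul_left 2)).congr fun p => by ring

theorem sub (hf : HalfSqSummable f) (hg : HalfSqSummable g) :
    HalfSqSummable fun j k => f j k - g j k :=
  ((Summable.add hf hg).sub ((hf.mul hg).mul_left 2)).congr fun p => by ring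

theorem div_const (hf : HalfSqSummable f) (c : ℝ) : HalfSqSummable fun j k => f j k / c :=
  (Summable.div_const hf (c ^ 2)).congr fun p => by ring

theorem comp_snd (hf : HalfSqSummable f) (e : ℤ ≃ ℤ) : HalfSqSummable fun j k => f j (e k) :=
  ((Equiv.refl ℕ).prodCongr e).summable_iff.mpr hf

theorem comp_succ_fst (hf : HalfSqSummable f) : HalfSqSummable fun j k => f (j + 1) k := by
  refine (summable_prod_of_nonneg fun _ => sq_nonneg _).2 ⟨fun j => ?_, ?_⟩
  · simpa using Summable.prod_factor hf (j + 1)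
  · simpa using (summable_nat_add_iff 1).2 (Summable.prod hf)

theorem row (hf : HalfSqSummable f) (j : ℕ) : Summable fun k => f j k ^ 2 :=
  Summable.prod_factor hf j

theorem D2p (hf : HalfSqSummable f) : HalfSqSummable (D2p f) :=
  (hf.comp_snd (Equiv.addRight 1)).sub hf

theorem D2m (hf : HalfSqSummable f) : HalfSqSummable (D2m f) :=
  hf.sub (hf.comp_snd (Equiv.subRight 1))

theorem D20 (hf : HalfSqSummable f) : HalfSqSummable (D20 f) :=
  (hf.D2p.add hf.D2m).div_const 2

theorem L2 (hf : HalfSqSummable f) : HalfSqSummable (L2 f) :=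
  hf.D2m.D2p

theorem D1p (hf : HalfSqSummable f) : HalfSqSummable (D1p f) :=
  hf.comp_succ_fst.sub hf

end HalfSqSummable

namespace memH

variable {f : ℤ → ℤ → ℝ}

theorem halfSqSummable (hf : memH f) : HalfSqSummable f := hf.2

theorem comp_pred_fst (hf : memH f) : HalfSqSummable fun j k => f (j - 1) k := by
  refine (summable_prod_of_nonneg fun _ => sq_nonneg _).2 ⟨fun j => ?_, ?_⟩
  · cases j with
    | zero => simpa [hf.1] using hf.halfSqSummable.row 0
    | succ n => simpa using hf.halfSqSummable.row n
  · refine (summable_nat_add_iff 1).1 ?_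
    simpa using Summable.prod hf.halfSqSummable

theorem D1m (hf : memH f) : HalfSqSummable (D1m f) :=
  hf.halfSqSummable.sub hf.comp_pred_fst

theorem D10 (hf : memH f) : HalfSqSummable (D10 f) :=
  (hf.halfSqSummable.D1p.add hf.D1m).div_const 2

theorem L1 (hf : memH f) : HalfSqSummable (L1 f) :=
  hf.D1m.D1p

theorem D2m (hf : memH f) : memH (D2m f) :=
  ⟨fun k => by simp [_root_.D2m, hf.1], hf.halfSqSummable.D2m⟩

theorem D20 (hf : memH f) : memH (D20 f) :=
  ⟨fun k => by simp [_root_.D20, D2p, _root_.D2m, hf.1], hf.halfSqSummable.D20⟩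

theorem L2 (hf : memH f) : memH (L2 f) :=
  ⟨fun k => by simp [_root_.L2, D2p, _root_.D2m, hf.1], hf.halfSqSummable.L2⟩

end memH

section ScalarProduct

variable {f g : ℤ → ℤ → ℝ}

theorem ipH_comm (f g : ℤ → ℤ → ℝ) : ipH f g = ipH g f :=
  tsum_congr fun _ => mul_comm _ _

theorem HalfSqSummable.hasSum_ipH (hf : HalfSqSummable f) (hg : HalfSqSummable g) :
    HasSum (fun p : ℕ × ℤ => f p.1 p.2 * g p.1 p.2) (ipH f g) :=
  (hf.mul hg).hasSum

theorem ipH_D20_self (hf : HalfSqSummable f) : ipH f (D20 f) = 0 := by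
  have hT := (hasSum_sub_succ_snd (G := fun j k => f j (k - 1) * f j k)
    ((hf.comp_snd (Equiv.subRight 1)).mul hf)).mul_left (1 / 2)
  rw [mul_zero] at hT
  refine (hT.congr_fun fun p => ?_).tsum_eq
  simp only [D20, D2p, D2m, add_sub_cancel_right]
  ring

theorem ipH_L2 (hf : HalfSqSummable f) (hg : HalfSqSummable g) :
    ipH f (L2 g) = -ipH (D2m f) (D2m g) := by
  have hT := (hasSum_sub_succ_snd (G := fun j k => f j (k - 1) * D2m g j k)
    ((hf.comp_snd (Equiv.subRight 1)).mul hg.D2m)).sub (hf.D2m.hasSum_ipH hg.D2m)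
  rw [zero_sub] at hT
  refine (hT.congr_fun fun p => ?_).tsum_eq
  simp only [L2, D2p, D2m, add_sub_cancel_right]
  ring

theorem ipH_D10_self (hf : memH f) : ipH f (D10 f) = -(1 / 2) * ∑' k, f 0 k ^ 2 := by
  have hT := (hasSum_sub_succ_fst (G := fun j k => f (j - 1) k * f j k)
    (hf.comp_pred_fst.mul hf.halfSqSummable)).mul_left (1 / 2)
  have hbdry : ∑' k, f (0 - 1) k * f 0 k = ∑' k, f 0 k ^ 2 := by simp [hf.1, sq]
  rw [hbdry, mul_neg, ← neg_mul] at hT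
  refine (hT.congr_fun fun p => ?_).tsum_eq
  simp only [D10, D1p, D1m, add_sub_cancel_right]
  ring

theorem ipH_D10_L1_self (hf : memH f) : ipH (D10 f) (L1 f) = 0 := by
  have hT := (hasSum_sub_succ_fst (G := fun j k => D1m f j k ^ 2) hf.D1m).mul_left (1 / 2)
  have hbdry : ∑' k, D1m f 0 k ^ 2 = 0 := by simp [D1m, hf.1]
  rw [hbdry, neg_zero, mul_zero] at hT
  refine (hT.congr_fun fun p => ?_).tsum_eq
  simp only [D10, L1, D1p, D1m, add_sub_cancel_right]
  ring

theorem ipH_L1 (hf : memH f) (hg : memH g) : ipH f (L1 g) = -ipH (D1m f) (D1m g) := by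
  have hT := (hasSum_sub_succ_fst (G := fun j k => f (j - 1) k * D1m g j k)
    (hf.comp_pred_fst.mul hg.D1m)).sub (hf.D1m.hasSum_ipH hg.D1m)
  have hbdry : ∑' k, f (0 - 1) k * D1m g 0 k = 0 := by simp [D1m, hg.1]
  rw [hbdry, neg_zero, zero_sub] at hT
  refine (hT.congr_fun fun p => ?_).tsum_eq
  simp only [L1, D1p, D1m, add_sub_cancel_right]
  ring

end ScalarProduct

section Commutation

variable (f : ℤ → ℤ → ℝ)

theorem D2m_D10_comm : D2m (D10 f) = D10 (D2m f) := by
  funext j k; simp only [D2m, D10, D1p, D1m]; ring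

theorem D10_D20_comm : D10 (D20 f) = D20 (D10 f) := by
  funext j k; simp only [D10, D20, D1p, D1m, D2p, D2m]; ring

theorem D2m_L1_comm : D2m (L1 f) = L1 (D2m f) := by
  funext j k; simp only [D2m, L1, D1p, D1m]; ring

theorem L1_L2_comm : L1 (L2 f) = L2 (L1 f) := by
  funext j k; simp only [L1, L2, D1p, D1m, D2p, D2m]; ring

theorem D1m_D20_comm : D1m (D20 f) = D20 (D1m f) := by
  funext j k; simp only [D1m, D20, D2p, D2m]; ring

theorem D1m_L2_comm : D1m (L2 f) = L2 (D1m f) := by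
  funext j k; simp only [D1m, L2, D2p, D2m]; ring

theorem D2m_D20_comm : D2m (D20 f) = D20 (D2m f) := by
  funext j k; simp only [D2m, D20, D2p, add_sub_cancel_right, sub_add_cancel]; ring

end Commutation

section Terms

variable {u : ℤ → ℤ → ℝ}

theorem ipH_D10_L2 (hu : memH u) : ipH (D10 u) (L2 u) = 1 / 2 * ∑' k, D2m u 0 k ^ 2 := by
  rw [ipH_L2 hu.D10 hu.halfSqSummable, D2m_D10_comm, ipH_comm, ipH_D10_self hu.D2m]
  ring

theorem ipH_D10_D10_D20 (hu : memH u) : ipH (D10 u) (D10 (D20 u)) = 0 := by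
  rw [D10_D20_comm, ipH_D20_self hu.D10]

theorem ipH_D10_L1_L2 (hu : memH u) : ipH (D10 u) (L1 (L2 u)) = 0 := by
  rw [L1_L2_comm, ipH_L2 hu.D10 hu.L1, D2m_D10_comm, D2m_L1_comm, ipH_D10_L1_self hu.D2m,
    neg_zero]

theorem ipH_D20_L1 (hu : memH u) : ipH (D20 u) (L1 u) = 0 := by
  rw [ipH_L1 hu.D20 hu, D1m_D20_comm, ipH_comm, ipH_D20_self hu.D1m, neg_zero]

theorem ipH_D20_L2 (hu : memH u) : ipH (D20 u) (L2 u) = 0 := by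
  rw [ipH_L2 hu.D20.halfSqSummable hu.halfSqSummable, D2m_D20_comm, ipH_comm,
    ipH_D20_self hu.D2m.halfSqSummable, neg_zero]

theorem ipH_D20_L1_L2 (hu : memH u) : ipH (D20 u) (L1 (L2 u)) = 0 := by
  rw [ipH_L1 hu.D20 hu.L2, D1m_D20_comm, D1m_L2_comm, ipH_L2 hu.D1m.D20 hu.D1m, D2m_D20_comm,
    ipH_comm, ipH_D20_self hu.D1m.D2m, neg_zero, neg_zero]

end Terms

theorem two_mul_ipH_vop_wop (α β : ℝ) {u : ℤ → ℤ → ℝ} (hu : memH u) :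
    2 * ipH (vop α β u) (wop α β u) =
      α ^ 3 * ipH (D10 u) (L1 u) + α * β ^ 2 * ipH (D10 u) (L2 u)
        + 2 * α ^ 2 * β * ipH (D10 u) (D10 (D20 u))
        - α * (α ^ 2 + β ^ 2) / 4 * ipH (D10 u) (L1 (L2 u))
        + α ^ 2 * β * ipH (D20 u) (L1 u) + β ^ 3 * ipH (D20 u) (L2 u)
        + 2 * α * β ^ 2 * ipH (D20 u) (D10 (D20 u))
        - β * (α ^ 2 + β ^ 2) / 4 * ipH (D20 u) (L1 (L2 u)) := by
  have hD20 := hu.halfSqSummable.D20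
  have hL2 := hu.halfSqSummable.L2
  have hD10D20 := hu.D20.D10
  have hL1L2 := hu.L2.L1
  have hsum := ((((((((hu.D10.hasSum_ipH hu.L1).mul_left (α ^ 3)).add
    ((hu.D10.hasSum_ipH hL2).mul_left (α * β ^ 2))).add
    ((hu.D10.hasSum_ipH hD10D20).mul_left (2 * α ^ 2 * β))).sub
    ((hu.D10.hasSum_ipH hL1L2).mul_left (α * (α ^ 2 + β ^ 2) / 4))).add
    ((hD20.hasSum_ipH hu.L1).mul_left (α ^ 2 * β))).add
    ((hD20.hasSum_ipH hL2).mul_left (β ^ 3))).add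
    ((hD20.hasSum_ipH hD10D20).mul_left (2 * α * β ^ 2))).sub
    ((hD20.hasSum_ipH hL1L2).mul_left (β * (α ^ 2 + β ^ 2) / 4))
  rw [ipH, ← tsum_mul_left]
  refine (hsum.congr_fun fun p => ?_).tsum_eq
  simp only [vop, wop]
  ring

theorem tsum_mul_L2_succ {u : ℤ → ℤ → ℝ} (hu : HalfSqSummable u) :
    ∑' k, u 0 k * L2 u 0 (k + 1) = ∑' k, D2m u 0 k ^ 2 - 2 * ∑' k, D20 u 0 k ^ 2 := by
  have hr : Summable fun k => u 0 k ^ 2 := by simpa using hu.row 0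
  have hrm : Summable fun k => u 0 (k - 1) ^ 2 :=
    (Equiv.subRight 1).summable_iff (f := fun k => u 0 k ^ 2) |>.mpr hr
  have hrp : Summable fun k => u 0 (k + 1) ^ 2 :=
    (Equiv.addRight 1).summable_iff (f := fun k => u 0 k ^ 2) |>.mpr hr
  let H : ℤ → ℝ := fun k => u 0 (k - 1) * u 0 (k + 1) - 2 * (u 0 (k - 1) * u 0 k)
      + (u 0 (k - 1) ^ 2 + u 0 k ^ 2) / 2
  have hH : Summable H :=
    ((hrm.mul_of_sq hrp).sub ((hrm.mul_of_sq hr).mul_left 2)).add ((hrm.add hr).div_const 2)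
  have hD2m : Summable fun k => D2m u 0 k ^ 2 := by simpa using hu.D2m.row 0
  have hD20 : Summable fun k => D20 u 0 k ^ 2 := by simpa using hu.D20.row 0
  -- `u₀ₖ (L2 u)₀,ₖ₊₁ = (D2m u)₀ₖ² - 2 (D20 u)₀ₖ² + (H (k + 1) - H k)`
  have hT := ((hasSum_sub_comp_equiv (Equiv.addRight 1) hH).add hD2m.hasSum).sub
    (hD20.hasSum.mul_left 2)
  rw [zero_add] at hT
  refine (hT.congr_fun fun k => ?_).tsum_eq
  simp only [H, L2, D2p, D2m, D20, Equiv.coe_addRight, add_sub_cancel_right]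
  ring

theorem halfspace_vw_boundary_general (a b lam mu : ℝ) (ha : a < 0)
    (u : ℤ → ℤ → ℝ) (hu : memH u) :
    2 * ipH (vop (lam * a) (mu * b) u) (wop (lam * a) (mu * b) u) =
      -(lam * |a| * (mu * b) ^ 2 / 2) * ∑' k : ℤ, u 0 k * L2 u 0 (k + 1) := by
  rw [two_mul_ipH_vop_wop _ _ hu, ipH_D10_L1_self hu, ipH_D10_L2 hu, ipH_D10_D10_D20 hu,
    ipH_D10_L1_L2 hu, ipH_D20_L1 hu, ipH_D20_L2 hu, ipH_D10_self hu.D20, ipH_D20_L1_L2 hu,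
    tsum_mul_L2_succ hu.halfSqSummable, abs_of_neg ha]
  ring

/-- Lemma 4 (ii): boundary term produced by the scalar product of `v` and `w`
in the half-space. -/
theorem halfspace_vw_boundary (a b lam mu : ℝ) (ha : a < 0) (hlam : 0 < lam) (hmu : 0 < mu)
    (u : ℤ → ℤ → ℝ) (hu : memH u) :
    2 * ipH (vop (lam * a) (mu * b) u) (wop (lam * a) (mu * b) u) =
      -(lam * |a| * (mu * b) ^ 2 / 2) * ∑' k : ℤ, u 0 k * L2 u 0 (k + 1) :=
  halfspace_vw_boundary_general a b lam mu ha u hu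
end
end
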